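/- The bicyclic monoid B, presented by ⟨a, b | a*b = 1⟩, is not an LWF semigroup. -/

import Mathlib

namespace Stmt14

/-- A semigroup `S` is LWF (locally wrapped by the class of finite semigroups) if for every
finite subset `H` of `S` there exist a finite semigroup `D` and a function `d : D → S` such
that `H ⊆ d(D)` and `d (x' * y') = d x' * d y'` whenever `d x', d y' ∈ H`. -/
def IsLWF (S : Type*) [Semigroup S] : Prop :=
  ∀ H : Finset S, ∃ (D : Type) (_ : Semigroup D) (_ : Fintype D) (d : D → S),
    (↑H ⊆ Set.range d) ∧
      ∀ x' y' : D, d x' ∈ H → d y' ∈ H → d (x' * y') = d x' * d y'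

/-- The generator `a` of the free monoid on two generators. -/
def a : FreeMonoid (Fin 2) := FreeMonoid.of 0

/-- The generator `b` of the free monoid on two generators. -/
def b : FreeMonoid (Fin 2) := FreeMonoid.of 1

/-- The defining relation `a * b = 1`. -/
def rel : FreeMonoid (Fin 2) → FreeMonoid (Fin 2) → Prop :=
  fun x y => x = a * b ∧ y = 1

/-- The bicyclic monoid `B = ⟨a, b ∣ ab = 1⟩`. -/
def B : Type := (conGen rel).Quotient

instance : Monoid B := Con.monoid _

/-!
If a finite semigroup `D` wraps `{1, A, B}` via `d`, where `A * B = 1`, choose an idempotent `f`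
with `d f = 1` whose local monoid `f D f` is smallest, and put `u = f x f` with `d x = A`. The
elements `u z` with `z ∈ f D f` and `d z = B` form a subsemigroup of `f D f`; an idempotent in it
has value `1`, so by minimality it is `f`. Hence `u` has a right inverse `z` in the finite monoid
`f D f`, so `z u = f` and `B * A = d (z u) = d f = 1`. Thus LWF monoids are Dedekind-finite,
whereas in the bicyclic monoid `b a ≠ 1`, as its action on `ℕ` by `a ↦ pred`, `b ↦ succ` shows.
-/

section LocalMonoid

variable {D : Type*} [Semigroup D]

def localMonoid (f : D) : Set D := {t | f * t = t ∧ t * f = t}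

lemma mul_mem_localMonoid {f s t : D} (hs : s ∈ localMonoid f) (ht : t ∈ localMonoid f) :
    s * t ∈ localMonoid f :=
  ⟨by rw [← mul_assoc, hs.1], by rw [mul_assoc, ht.2]⟩

lemma mul_mul_mem_localMonoid {f : D} (hf : IsIdempotentElem f) (x : D) :
    f * x * f ∈ localMonoid f :=
  ⟨by rw [← mul_assoc, ← mul_assoc, hf.eq], by rw [mul_assoc, hf.eq]⟩

abbrev localMonoid.monoid {f : D} (hf : IsIdempotentElem f) : Monoid (localMonoid f) where
  mul s t := ⟨s * t, mul_mem_localMonoid s.2 t.2⟩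
  mul_assoc _ _ _ := Subtype.ext (mul_assoc _ _ _)
  one := ⟨f, hf.eq, hf.eq⟩
  one_mul t := Subtype.ext t.2.1
  mul_one t := Subtype.ext t.2.2

lemma localMonoid_subset {e f : D} (hef : e ∈ localMonoid f) :
    localMonoid e ⊆ localMonoid f := fun t ht =>
  ⟨by rw [← ht.1, ← mul_assoc, hef.1], by rw [← ht.2, mul_assoc, hef.2]⟩

variable [Finite D]

lemma mul_eq_of_mul_eq_of_mem_localMonoid {f u z : D} (hf : IsIdempotentElem f)
    (hu : u ∈ localMonoid f) (hz : z ∈ localMonoid f) (huz : u * z = f) : z * u = f := by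
  let _ := localMonoid.monoid hf
  exact congrArg Subtype.val (mul_eq_one_symm (a := ⟨u, hu⟩) (b := ⟨z, hz⟩) (Subtype.ext huz))

lemma eq_of_mem_localMonoid_of_ncard_le {e f : D} (hf : IsIdempotentElem f)
    (hef : e ∈ localMonoid f) (hcard : (localMonoid f).ncard ≤ (localMonoid e).ncard) :
    e = f := by
  have heq : localMonoid e = localMonoid f :=
    Set.eq_of_subset_of_ncard_le (localMonoid_subset hef) hcard
  have hfe : f ∈ localMonoid e := heq ▸ ⟨hf.eq, hf.eq⟩
  rw [← hef.2, hfe.1]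

lemma exists_isIdempotentElem_of_mul_mem {s : Set D} (hs : s.Nonempty)
    (hmul : ∀ x ∈ s, ∀ y ∈ s, x * y ∈ s) : ∃ e ∈ s, IsIdempotentElem e := by
  let _ : TopologicalSpace D := ⊥
  have : DiscreteTopology D := ⟨rfl⟩
  exact exists_idempotent_in_compact_subsemigroup (fun _ => continuous_of_discreteTopology) s hs
    s.toFinite.isCompact hmul

end LocalMonoid

section Wrapping

variable {D S : Type*} [Semigroup D] [Monoid S]

def MulOnPreimage (d : D → S) (H : Set S) : Prop :=
  ∀ p q : D, d p ∈ H → d q ∈ H → d (p * q) = d p * d q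

namespace MulOnPreimage

variable {d : D → S} {H : Set S} {p q : D} {s t : S}

lemma map_mul_of_eq (hd : MulOnPreimage d H) (hs : s ∈ H) (ht : t ∈ H) (hp : d p = s)
    (hq : d q = t) : d (p * q) = s * t := by
  rw [hd p q (hp ▸ hs) (hq ▸ ht), hp, hq]

variable [Finite D]

theorem mul_eq_one_symm (hd : MulOnPreimage d H) {A B : S} (h1 : 1 ∈ H) (hA : A ∈ H)
    (hB : B ∈ H) (hAd : A ∈ Set.range d) (hBd : B ∈ Set.range d) (hAB : A * B = 1) :
    B * A = 1 := by
  obtain ⟨x, hx⟩ := hAd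
  obtain ⟨y, hy⟩ := hBd
  have hE : {e | IsIdempotentElem e ∧ d e = 1}.Nonempty := by
    obtain ⟨e, he, hidem⟩ := exists_isIdempotentElem_of_mul_mem (s := {p | d p = 1})
      ⟨x * y, (hd.map_mul_of_eq hA hB hx hy).trans hAB⟩
      fun p hp q hq => (hd.map_mul_of_eq h1 h1 hp hq).trans (one_mul 1)
    exact ⟨e, hidem, he⟩
  obtain ⟨f, ⟨hf, hf1⟩, hmin⟩ := Set.exists_min_image _ (fun e => (localMonoid e).ncard)
    (Set.toFinite _) hE
  have hfzf {z : D} {C : S} (hC : C ∈ H) (hz : d z = C) : d (f * z * f) = C := by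
    rw [hd.map_mul_of_eq hC h1 ((hd.map_mul_of_eq h1 hC hf1 hz).trans (one_mul C)) hf1, mul_one]
  set u := f * x * f
  have hu : u ∈ localMonoid f := mul_mul_mem_localMonoid hf x
  have hdu : d u = A := hfzf hA hx
  set Q := {t | ∃ z ∈ localMonoid f, d z = B ∧ u * z = t}
  have hQ : Q.Nonempty := ⟨_, _, mul_mul_mem_localMonoid hf y, hfzf hB hy, rfl⟩
  have hQmul : ∀ s ∈ Q, ∀ t ∈ Q, s * t ∈ Q := by
    rintro _ ⟨z, hz, hzB, rfl⟩ _ ⟨z', hz', hz'B, rfl⟩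
    have huz' : d (u * z') = 1 := (hd.map_mul_of_eq hA hB hdu hz'B).trans hAB
    refine ⟨z * (u * z'), mul_mem_localMonoid hz (mul_mem_localMonoid hu hz'), ?_,
      (mul_assoc _ _ _).symm⟩
    rw [hd.map_mul_of_eq hB h1 hzB huz', mul_one]
  obtain ⟨_, ⟨z, hz, hzB, rfl⟩, he⟩ := exists_isIdempotentElem_of_mul_mem hQ hQmul
  have huz : u * z = f := eq_of_mem_localMonoid_of_ncard_le hf (mul_mem_localMonoid hu hz)
    (hmin _ ⟨he, (hd.map_mul_of_eq hA hB hdu hzB).trans hAB⟩)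
  rw [← hd.map_mul_of_eq hB hA hzB hdu,
    mul_eq_of_mul_eq_of_mem_localMonoid hf hu hz huz, hf1]

end MulOnPreimage

theorem IsLWF.isDedekindFiniteMonoid {S : Type*} [Monoid S] (h : IsLWF S) :
    IsDedekindFiniteMonoid S where
  mul_eq_one_symm {A B} hAB := by
    classical
    obtain ⟨D, _, _, d, hsub, hd⟩ := h {1, A, B}
    exact MulOnPreimage.mul_eq_one_symm (d := d) (H := ↑({1, A, B} : Finset S)) hd
      (by simp) (by simp) (by simp) (hsub (by simp)) (hsub (by simp)) hAB

end Wrapping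

def toB : FreeMonoid (Fin 2) →* B := (conGen rel).mk'

lemma toB_a_mul_toB_b : toB a * toB b = 1 := by
  rw [← map_mul, ← map_one toB]
  exact (Con.eq _).mpr (ConGen.Rel.of _ _ ⟨rfl, rfl⟩)

def natAction : B →* Function.End ℕ :=
  (conGen rel).lift (FreeMonoid.lift ![Nat.pred, Nat.succ]) <| Con.conGen_le.mpr <| by
    rintro _ _ ⟨rfl, rfl⟩
    rw [Con.ker_rel, map_mul, map_one]
    rfl

lemma toB_b_mul_toB_a_ne_one : toB b * toB a ≠ 1 := fun h =>
  Nat.succ_ne_zero 0 (congrArg (fun g => natAction g 0) h)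

theorem B.not_isDedekindFiniteMonoid : ¬ IsDedekindFiniteMonoid B := fun _ =>
  toB_b_mul_toB_a_ne_one (mul_eq_one_symm toB_a_mul_toB_b)

/-- The bicyclic monoid `B = ⟨a, b ∣ ab = 1⟩` is not an LWF semigroup. -/
theorem bicyclic_not_isLWF : ¬ IsLWF B := fun h =>
  B.not_isDedekindFiniteMonoid h.isDedekindFiniteMonoid

end Stmt14
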